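/- In BCCSP_D^c with finite data set D, the axiom l.p = Σ_{d ∈ D} update(d, check(d, l.p)) is sound with respect to strong bisimilarity. -/

import Mathlib

/-!
Both sides have exactly the transitions `(d, l, d) → p`, one for each `d ∈ D`: the summand
`update(d, check(d, l.p))` contributes precisely the one for `d`, since `check` forces the incoming
datum to be `d` and `update` resets the outgoing one to `d`. Two terms with identical outgoing
transitions are bisimilar via the identity relation extended by that pair.
-/

def IsBisim {S L : Type*} (Tr : S → L → S → Prop) (R : S → S → Prop) : Prop :=
  Symmetric R ∧
    ∀ p q, R p q → ∀ l p', Tr p l p' → ∃ q', Tr q l q' ∧ R p' q'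

def Bisimilar {S L : Type*} (Tr : S → L → S → Prop) (p q : S) : Prop :=
  ∃ R, IsBisim Tr R ∧ R p q

/-- BCCSP_D^c terms over labels `L` and data constants `D`. -/
inductive TD (L D : Type*) where
  | zero : TD L D
  | pre : L → TD L D → TD L D
  | chk : D → TD L D → TD L D
  | upd : D → TD L D → TD L D
  | plus : TD L D → TD L D → TD L D

/-- The SOS transition relation of BCCSP_D^c, with labels `(d, l, d')`. -/
inductive TD.Tr {L D : Type*} : TD L D → D × L × D → TD L D → Prop where
  | pre (d : D) (l : L) (t : TD L D) : TD.Tr (.pre l t) (d, l, d) t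
  | chk {t : TD L D} {d : D} {l : L} {d' : D} {t' : TD L D} :
      TD.Tr t (d, l, d') t' → TD.Tr (.chk d t) (d, l, d') t'
  | upd {t : TD L D} {d : D} {l : L} {d' : D} {t' : TD L D} (e : D) :
      TD.Tr t (d, l, d') t' → TD.Tr (.upd e t) (d, l, e) t'
  | plusL {s : TD L D} {lab : D × L × D} {s' : TD L D} (t : TD L D) :
      TD.Tr s lab s' → TD.Tr (.plus s t) lab s'
  | plusR {s : TD L D} {lab : D × L × D} {s' : TD L D} (t : TD L D) :
      TD.Tr s lab s' → TD.Tr (.plus t s) lab s'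

/-- Iterated binary choice over a list of terms (empty sum is `0`). -/
def TD.sum {L D : Type*} (ts : List (TD L D)) : TD L D :=
  ts.foldr TD.plus TD.zero

theorem Bisimilar.of_tr_iff {S L : Type*} {Tr : S → L → S → Prop} {p q : S}
    (h : ∀ l s, Tr p l s ↔ Tr q l s) : Bisimilar Tr p q := by
  refine ⟨fun x y => x = y ∨ (x = p ∧ y = q) ∨ (x = q ∧ y = p), ⟨?_, ?_⟩, Or.inr (Or.inl ⟨rfl, rfl⟩)⟩
  · rintro x y (rfl | ⟨rfl, rfl⟩ | ⟨rfl, rfl⟩) <;> simp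
  · rintro x y (rfl | ⟨rfl, rfl⟩ | ⟨rfl, rfl⟩) l s hs
    · exact ⟨s, hs, Or.inl rfl⟩
    · exact ⟨s, (h l s).mp hs, Or.inl rfl⟩
    · exact ⟨s, (h l s).mpr hs, Or.inl rfl⟩

namespace TD

variable {L D : Type*}

theorem not_tr_zero (lab : D × L × D) (t' : TD L D) : ¬ Tr .zero lab t' := nofun

theorem tr_plus_iff (s t : TD L D) (lab : D × L × D) (t' : TD L D) :
    Tr (.plus s t) lab t' ↔ Tr s lab t' ∨ Tr t lab t' := by
  constructor
  · intro h
    cases h with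
    | plusL _ h => exact Or.inl h
    | plusR _ h => exact Or.inr h
  · rintro (h | h)
    exacts [.plusL t h, .plusR s h]

theorem tr_sum_iff (ts : List (TD L D)) (lab : D × L × D) (t' : TD L D) :
    Tr (sum ts) lab t' ↔ ∃ s ∈ ts, Tr s lab t' := by
  induction ts with
  | nil => simpa [sum] using not_tr_zero lab t'
  | cons a ts ih =>
    rw [sum, List.foldr_cons, tr_plus_iff, ← sum, ih]
    simp

theorem tr_pre_iff (l : L) (p : TD L D) (lab : D × L × D) (t' : TD L D) :
    Tr (.pre l p) lab t' ↔ ∃ d, lab = (d, l, d) ∧ t' = p := by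
  constructor
  · intro h
    cases h
    exact ⟨_, rfl, rfl⟩
  · rintro ⟨d, rfl, rfl⟩
    exact .pre d l _

theorem tr_chk_iff (e : D) (t : TD L D) (d : D) (l : L) (d' : D) (t' : TD L D) :
    Tr (.chk e t) (d, l, d') t' ↔ d = e ∧ Tr t (d, l, d') t' := by
  constructor
  · intro h
    cases h with | chk h => exact ⟨rfl, h⟩
  · rintro ⟨rfl, h⟩
    exact .chk h

theorem tr_upd_iff (e : D) (t : TD L D) (d : D) (l : L) (d' : D) (t' : TD L D) :
    Tr (.upd e t) (d, l, d') t' ↔ d' = e ∧ ∃ d'', Tr t (d, l, d'') t' := by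
  constructor
  · intro h
    cases h with | upd _ h => exact ⟨rfl, _, h⟩
  · rintro ⟨rfl, _, h⟩
    exact .upd d' h

theorem tr_upd_chk_pre_iff (d : D) (l : L) (p : TD L D) (lab : D × L × D) (t' : TD L D) :
    Tr (.upd d (.chk d (.pre l p))) lab t' ↔ lab = (d, l, d) ∧ t' = p := by
  obtain ⟨e, l', e'⟩ := lab
  simp only [tr_upd_iff, tr_chk_iff, tr_pre_iff, Prod.mk.injEq]
  grind

end TD

theorem prefix_axiom_sound {L D : Type*} [Fintype D] (l : L) (p : TD L D) :
    Bisimilar TD.Tr (TD.pre l p)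
      (TD.sum ((Finset.univ : Finset D).toList.map
        (fun d => TD.upd d (TD.chk d (TD.pre l p))))) := by
  refine Bisimilar.of_tr_iff fun lab t' => ?_
  simp [TD.tr_pre_iff, TD.tr_sum_iff, TD.tr_upd_chk_pre_iff]
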